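/- arXiv:1207.3778 — 6 statements merged into one kernel-verified Lean document; each statement's English description precedes it below -/
import Mathlib

section
/- The map x : α ↦ ᾱ is an involution of Q₁ (ᾱ̄ = α for all α), and the subgroup of the permutation group of Q₁ generated by the two permutations x : α ↦ ᾱ and y : α ↦ g(α) acts transitively on Q₁: for all arrows α, β there is an element w of this subgroup with w(α) = β. (Since x² = (x∘y)³ = id, this yields a transitive action of PSL₂(ℤ) on Q₁.) -/
/-!
Every vertex has exactly two outgoing arrows, so the arrows leaving `s α` are precisely `α` and
`ᾱ`; hence `ᾱ̄ = α`, and any two arrows with the same source lie in one orbit of `⟨x, y⟩`.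
Since `g α` leaves the target of `α`, each arrow `α : u → v` links the orbit of the arrows out
of `u` with that of the arrows out of `v`, and connectedness of `Q` makes the action transitive.
-/

open Function MulAction

theorem MulAction.isPretransitive_of_connected {G Q₀ Q₁ : Type*} [Group G] [MulAction G Q₁]
    (s t : Q₁ → Q₀) (hs : Surjective s)
    (hconn : ∀ u v : Q₀, Relation.EqvGen (fun a b => ∃ e : Q₁, s e = a ∧ t e = b) u v)
    (hsource : ∀ a b : Q₁, s a = s b → a ∈ orbit G b)
    (hstep : ∀ e : Q₁, ∃ b, s b = t e ∧ b ∈ orbit G e) :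
    IsPretransitive G Q₁ := by
  choose σ hσ using hs
  let r : Setoid Q₁ := orbitRel G Q₁
  -- vertices are related when the chosen arrows leaving them lie in one orbit
  let rσ : Setoid Q₀ := r.comap σ
  have hσr : ∀ a : Q₁, r a (σ (s a)) := fun a => hsource _ _ (hσ _).symm
  have hadj : ∀ u v, (∃ e : Q₁, s e = u ∧ t e = v) → rσ u v := by
    rintro _ _ ⟨e, rfl, rfl⟩
    obtain ⟨b, hb, heb⟩ := hstep e
    show r (σ (s e)) (σ (t e))
    exact r.trans (r.symm (hσr e)) (r.trans (mem_orbit_symm.mp heb) (hb ▸ hσr b))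
  refine ⟨fun a b => mem_orbit_iff.mp (mem_orbit_symm.mp ?_)⟩
  have hab : rσ (s a) (s b) := rσ.iseqv.eqvGen_iff.mp ((hconn _ _).mono hadj)
  exact r.trans (hσr a) (r.trans hab (r.symm (hσr b)))

section TwoOutgoing

variable {Q₀ Q₁ : Type*} [Fintype Q₁] [DecidableEq Q₀] {s : Q₁ → Q₀} {bar : Q₁ → Q₁}

theorem eq_or_eq_bar_of_source_eq
    (hout : ∀ v : Q₀, (Finset.univ.filter fun e => s e = v).card = 2)
    (hbar_ne : ∀ α : Q₁, bar α ≠ α) (hbar_s : ∀ α : Q₁, s (bar α) = s α)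
    {a b : Q₁} (hab : s b = s a) : b = a ∨ b = bar a := by
  classical
  have hfiber : ({a, bar a} : Finset Q₁) = Finset.univ.filter fun e => s e = s a := by
    refine Finset.eq_of_subset_of_card_le ?_ ?_
    · simp [Finset.insert_subset_iff, hbar_s]
    · rw [hout, Finset.card_pair (hbar_ne a).symm]
  have hb : b ∈ ({a, bar a} : Finset Q₁) := by simp [hfiber, hab]
  simpa using hb

theorem involutive_of_card_source_fiber_eq_two
    (hout : ∀ v : Q₀, (Finset.univ.filter fun e => s e = v).card = 2)
    (hbar_ne : ∀ α : Q₁, bar α ≠ α) (hbar_s : ∀ α : Q₁, s (bar α) = s α) :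
    Involutive bar := fun α =>
  (eq_or_eq_bar_of_source_eq hout hbar_ne hbar_s (by rw [hbar_s, hbar_s])).resolve_right
    (hbar_ne (bar α))

end TwoOutgoing

theorem stmt_4_general
  {Q₀ Q₁ : Type} [Fintype Q₁] [DecidableEq Q₀]
  (s t : Q₁ → Q₀)
  (hconn : ∀ u v : Q₀, Relation.EqvGen (fun a b => ∃ e : Q₁, s e = a ∧ t e = b) u v)
  (hout : ∀ v : Q₀, (Finset.univ.filter fun e => s e = v).card = 2)
  (g : Q₁ ≃ Q₁)
  (hsg : ∀ α : Q₁, s (g α) = t α)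
  (bar : Q₁ → Q₁)
  (hbar_ne : ∀ α : Q₁, bar α ≠ α)
  (hbar_s : ∀ α : Q₁, s (bar α) = s α) :
    (∀ α : Q₁, bar (bar α) = α) ∧
      ∃ xp : Equiv.Perm Q₁, (∀ α : Q₁, xp α = bar α) ∧
        ∀ α β : Q₁, ∃ w ∈ Subgroup.closure ({xp, g} : Set (Equiv.Perm Q₁)), w α = β := by
  have hbar : Involutive bar := involutive_of_card_source_fiber_eq_two hout hbar_ne hbar_s
  refine ⟨hbar, hbar.toPerm bar, fun _ => rfl, ?_⟩
  set G := Subgroup.closure ({hbar.toPerm bar, g} : Set (Equiv.Perm Q₁))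
  have hsurj : Surjective s := fun v => by
    obtain ⟨e, he⟩ := Finset.card_pos.mp (hout v ▸ two_pos)
    exact ⟨e, (Finset.mem_filter.mp he).2⟩
  have hsource : ∀ a b : Q₁, s a = s b → a ∈ orbit G b := fun a b hab => by
    rcases eq_or_eq_bar_of_source_eq hout hbar_ne hbar_s hab with rfl | rfl
    · exact mem_orbit_self a
    · exact ⟨⟨_, Subgroup.subset_closure (Set.mem_insert _ _)⟩, rfl⟩
  have hstep : ∀ e : Q₁, ∃ b, s b = t e ∧ b ∈ orbit G e := fun e =>
    ⟨g e, hsg e, ⟨g, Subgroup.subset_closure (Set.mem_insert_of_mem _ rfl)⟩, rfl⟩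
  have := isPretransitive_of_connected (G := G) s t hsurj hconn hsource hstep
  intro α β
  obtain ⟨w, hw⟩ := exists_smul_eq G α β
  exact ⟨w, w.2, hw⟩

theorem stmt_4
  {Q₀ Q₁ : Type} [Fintype Q₀] [Fintype Q₁] [DecidableEq Q₀] [DecidableEq Q₁]
  [Nonempty Q₀] [Nonempty Q₁]
  (s t : Q₁ → Q₀)
  (hconn : ∀ u v : Q₀, Relation.EqvGen (fun a b => ∃ e : Q₁, s e = a ∧ t e = b) u v)
  (hnoloop : ∀ e : Q₁, s e ≠ t e)
  (hno2cyc : ∀ e e' : Q₁, ¬ (s e = t e' ∧ t e = s e'))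
  (hout : ∀ v : Q₀, (Finset.univ.filter fun e => s e = v).card = 2)
  (hin : ∀ v : Q₀, (Finset.univ.filter fun e => t e = v).card = 2)
  (f g : Q₁ ≃ Q₁)
  (hfg : ∀ α : Q₁, f α ≠ g α)
  (hsf : ∀ α : Q₁, s (f α) = t α)
  (hsg : ∀ α : Q₁, s (g α) = t α)
  (hf3 : ∀ α : Q₁, f (f (f α)) = α)
  (bar : Q₁ → Q₁)
  (hbar_ne : ∀ α : Q₁, bar α ≠ α)
  (hbar_s : ∀ α : Q₁, s (bar α) = s α) :
    (∀ α : Q₁, bar (bar α) = α) ∧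
      ∃ xp : Equiv.Perm Q₁, (∀ α : Q₁, xp α = bar α) ∧
        ∀ α β : Q₁, ∃ w ∈ Subgroup.closure ({xp, g} : Set (Equiv.Perm Q₁)), w α = β :=
  stmt_4_general s t hconn hout g hsg bar hbar_ne hbar_s
end

section
/- For every arrow α ∈ Q₁, the three vertices s(α), s(f(α)), s(f²(α)) are pairwise distinct, and the six arrows α, ᾱ, f(α), g(α), f²(α), g(f(α)) are pairwise distinct. -/
/-! The arrows `α, f α, f² α` form an oriented triangle (`s ∘ f = t`, `f³ = id`), so their sources
are its three corners, pairwise joined by an arrow and hence distinct since there are no loops.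
The six arrows fall into three pairs with a common source, `α, ᾱ` at `s α`, `f α, g α` at
`t α = s (f α)` and `f² α, g (f α)` at `t (f α) = s (f² α)`: the two arrows of a pair differ by
hypothesis, and arrows of different pairs differ because their sources do. -/

section Triangle

variable {V E : Type*} {s t : E → V} {f : E → E}

theorem source_ne_source_apply (hnoloop : ∀ e, s e ≠ t e) (hsf : ∀ α, s (f α) = t α) (α : E) :
    s α ≠ s (f α) := by
  rw [hsf]
  exact hnoloop α

theorem source_ne_source_apply_apply (hnoloop : ∀ e, s e ≠ t e) (hsf : ∀ α, s (f α) = t α)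
    (hf3 : ∀ α, f (f (f α)) = α) (α : E) : s α ≠ s (f (f α)) := by
  conv_lhs => rw [← hf3 α, hsf]
  exact (hnoloop _).symm

theorem pairwise_ne_triangle_sources (hnoloop : ∀ e, s e ≠ t e) (hsf : ∀ α, s (f α) = t α)
    (hf3 : ∀ α, f (f (f α)) = α) (α : E) :
    [s α, s (f α), s (f (f α))].Pairwise (· ≠ ·) := by
  simp only [List.pairwise_cons, List.mem_cons, List.not_mem_nil, or_false, forall_eq_or_imp,
    forall_eq, IsEmpty.forall_iff, implies_true, List.Pairwise.nil, and_self, and_true]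
  exact ⟨⟨source_ne_source_apply hnoloop hsf α, source_ne_source_apply_apply hnoloop hsf hf3 α⟩,
    source_ne_source_apply hnoloop hsf (f α)⟩

end Triangle

theorem List.pairwise_ne_of_pairwise_ne_map_pairs {E V : Type*} (s : E → V) {a a' b b' c c' : E}
    (ha : a ≠ a') (hb : b ≠ b') (hc : c ≠ c')
    (hsa : s a' = s a) (hsb : s b' = s b) (hsc : s c' = s c)
    (hs : [s a, s b, s c].Pairwise (· ≠ ·)) :
    [a, a', b, b', c, c'].Pairwise (· ≠ ·) := by
  simp only [ne_eq, List.pairwise_cons, List.mem_cons, List.not_mem_nil, or_false,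
    forall_eq_or_imp, forall_eq, IsEmpty.forall_iff, implies_true, List.Pairwise.nil, and_self,
    and_true] at hs ⊢
  refine ⟨⟨?_, ?_, ?_, ?_, ?_⟩, ⟨?_, ?_, ?_, ?_⟩, ⟨?_, ?_, ?_⟩, ⟨?_, ?_⟩, ?_⟩ <;>
    rintro rfl <;> simp_all

theorem stmt_5_general
  {Q₀ Q₁ : Type}
  (s t : Q₁ → Q₀)
  (hnoloop : ∀ e : Q₁, s e ≠ t e)
  (f g : Q₁ ≃ Q₁)
  (hfg : ∀ α : Q₁, f α ≠ g α)
  (hsf : ∀ α : Q₁, s (f α) = t α)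
  (hsg : ∀ α : Q₁, s (g α) = t α)
  (hf3 : ∀ α : Q₁, f (f (f α)) = α)
  (bar : Q₁ → Q₁)
  (hbar_ne : ∀ α : Q₁, bar α ≠ α)
  (hbar_s : ∀ α : Q₁, s (bar α) = s α) :
    ∀ α : Q₁, ([s α, s (f α), s (f (f α))] : List Q₀).Pairwise (· ≠ ·) ∧
      ([α, bar α, f α, g α, f (f α), g (f α)] : List Q₁).Pairwise (· ≠ ·) := by
  intro α
  have hsources := pairwise_ne_triangle_sources hnoloop hsf hf3 α
  refine ⟨hsources, List.pairwise_ne_of_pairwise_ne_map_pairs s (hbar_ne α).symm (hfg α)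
    (hfg (f α)) (hbar_s α) ?_ ?_ hsources⟩ <;> rw [hsg, hsf]

theorem stmt_5
  {Q₀ Q₁ : Type} [Fintype Q₀] [Fintype Q₁] [DecidableEq Q₀] [DecidableEq Q₁]
  [Nonempty Q₀] [Nonempty Q₁]
  (s t : Q₁ → Q₀)
  (hconn : ∀ u v : Q₀, Relation.EqvGen (fun a b => ∃ e : Q₁, s e = a ∧ t e = b) u v)
  (hnoloop : ∀ e : Q₁, s e ≠ t e)
  (hno2cyc : ∀ e e' : Q₁, ¬ (s e = t e' ∧ t e = s e'))
  (hout : ∀ v : Q₀, (Finset.univ.filter fun e => s e = v).card = 2)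
  (hin : ∀ v : Q₀, (Finset.univ.filter fun e => t e = v).card = 2)
  (f g : Q₁ ≃ Q₁)
  (hfg : ∀ α : Q₁, f α ≠ g α)
  (hsf : ∀ α : Q₁, s (f α) = t α)
  (hsg : ∀ α : Q₁, s (g α) = t α)
  (hf3 : ∀ α : Q₁, f (f (f α)) = α)
  (bar : Q₁ → Q₁)
  (hbar_ne : ∀ α : Q₁, bar α ≠ α)
  (hbar_s : ∀ α : Q₁, s (bar α) = s α) :
    ∀ α : Q₁, ([s α, s (f α), s (f (f α))] : List Q₀).Pairwise (· ≠ ·) ∧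
      ([α, bar α, f α, g α, f (f α), g (f α)] : List Q₁).Pairwise (· ≠ ·) :=
  stmt_5_general s t hnoloop f g hfg hsf hsg hf3 bar hbar_ne hbar_s
end

section
/- For every arrow α ∈ Q₁ one has f²(α) = g^{n_ᾱ − 1}(ᾱ), where n_ᾱ is the size of the g-orbit of ᾱ (the minimal period of ᾱ under g). -/
/-! The arrows `f β`, `g β` and `bar (f β)` all start at `t β`, where only two arrows start;
since `f β ≠ g β` and `bar (f β) ≠ f β`, this forces `bar (f β) = g β`. For `β = f (f α)`,
`f³ = id` turns this into `g (f (f α)) = bar α`, i.e. `f (f α) = g⁻¹ (bar α)`, and on a finite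
set `g⁻¹` is `g` iterated one step short of the period. -/

theorem Finset.eq_of_card_eq_two {α : Type*} {s : Finset α} (hs : s.card = 2) {x y z : α}
    (hx : x ∈ s) (hy : y ∈ s) (hz : z ∈ s) (hxy : x ≠ y) (hzx : z ≠ x) : z = y := by
  classical
  obtain ⟨a, b, -, rfl⟩ := Finset.card_eq_two.mp hs
  simp only [Finset.mem_insert, Finset.mem_singleton] at hx hy hz
  grind

theorem Equiv.Perm.iterate_minimalPeriod_sub_one {α : Type*} [Finite α] (g : Equiv.Perm α)
    (x : α) : (⇑g)^[Function.minimalPeriod g x - 1] x = g.symm x := by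
  have hpos : 0 < Function.minimalPeriod g x :=
    Function.minimalPeriod_pos_of_mem_periodicPts (g.injective.mem_periodicPts x)
  apply g.injective
  rw [Equiv.apply_symm_apply, ← Function.iterate_succ_apply' (⇑g), Nat.succ_eq_add_one,
    Nat.sub_one_add_one hpos.ne', Function.iterate_minimalPeriod]

theorem stmt_6_general
  {Q₀ Q₁ : Type} [Fintype Q₁] [DecidableEq Q₀]
  (s t : Q₁ → Q₀)
  (hout : ∀ v : Q₀, (Finset.univ.filter fun e => s e = v).card = 2)
  (f g : Q₁ ≃ Q₁)
  (hfg : ∀ α : Q₁, f α ≠ g α)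
  (hsf : ∀ α : Q₁, s (f α) = t α)
  (hsg : ∀ α : Q₁, s (g α) = t α)
  (hf3 : ∀ α : Q₁, f (f (f α)) = α)
  (bar : Q₁ → Q₁)
  (hbar_ne : ∀ α : Q₁, bar α ≠ α)
  (hbar_s : ∀ α : Q₁, s (bar α) = s α) :
    ∀ α : Q₁, f (f α) = (⇑g)^[Function.minimalPeriod (⇑g) (bar α) - 1] (bar α) := by
  have bar_f : ∀ β, bar (f β) = g β := fun β =>
    Finset.eq_of_card_eq_two (hout (t β)) (by simp [hsf]) (by simp [hsg]) (by simp [hbar_s, hsf])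
      (hfg β) (hbar_ne (f β))
  intro α
  rw [Equiv.Perm.iterate_minimalPeriod_sub_one, Equiv.eq_symm_apply, ← bar_f, hf3]

theorem stmt_6
  {Q₀ Q₁ : Type} [Fintype Q₀] [Fintype Q₁] [DecidableEq Q₀] [DecidableEq Q₁]
  [Nonempty Q₀] [Nonempty Q₁]
  (s t : Q₁ → Q₀)
  (hconn : ∀ u v : Q₀, Relation.EqvGen (fun a b => ∃ e : Q₁, s e = a ∧ t e = b) u v)
  (hnoloop : ∀ e : Q₁, s e ≠ t e)
  (hno2cyc : ∀ e e' : Q₁, ¬ (s e = t e' ∧ t e = s e'))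
  (hout : ∀ v : Q₀, (Finset.univ.filter fun e => s e = v).card = 2)
  (hin : ∀ v : Q₀, (Finset.univ.filter fun e => t e = v).card = 2)
  (f g : Q₁ ≃ Q₁)
  (hfg : ∀ α : Q₁, f α ≠ g α)
  (hsf : ∀ α : Q₁, s (f α) = t α)
  (hsg : ∀ α : Q₁, s (g α) = t α)
  (hf3 : ∀ α : Q₁, f (f (f α)) = α)
  (bar : Q₁ → Q₁)
  (hbar_ne : ∀ α : Q₁, bar α ≠ α)
  (hbar_s : ∀ α : Q₁, s (bar α) = s α) :
    ∀ α : Q₁, f (f α) = (⇑g)^[Function.minimalPeriod (⇑g) (bar α) - 1] (bar α) :=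
  stmt_6_general s t hout f g hfg hsf hsg hf3 bar hbar_ne hbar_s
end

section
/- For every arrow α ∈ Q₁ one has g(f(α)) = f(g^{n_ᾱ − 2}(ᾱ)), where n_ᾱ is the size of the g-orbit of ᾱ (the minimal period of ᾱ under g). -/
/-! The two arrows leaving `t α` are `f α` and `g α`, so `g = bar ∘ f` with `bar` an
involution. Together with `f³ = id` this gives `g (g (f (f (g (f α))))) = bar α`. Since `g`
has no fixed points (`s (g a) = t a ≠ s a`), the `g`-orbit of `bar α` has length `n ≥ 2`, so
also `g (g (g^[n - 2] (bar α))) = bar α`. Cancelling `g` twice and applying `f` once more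
yields the claim. -/

open Finset Function

lemma Finset.eq_or_eq_of_card_eq_two {α : Type*} {S : Finset α} (hS : #S = 2) {a b c : α}
    (ha : a ∈ S) (hb : b ∈ S) (hc : c ∈ S) (hab : a ≠ b) : c = a ∨ c = b := by
  classical
  obtain ⟨x, y, -, rfl⟩ := card_eq_two.1 hS
  simp only [mem_insert, mem_singleton] at ha hb hc
  grind

lemma Function.two_le_minimalPeriod {α : Type*} [Finite α] {g : α → α} (hg : Injective g)
    {x : α} (hx : ¬ IsFixedPt g x) : 2 ≤ minimalPeriod g x := by
  have hpos := minimalPeriod_pos_of_mem_periodicPts (hg.mem_periodicPts x)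
  have hne : minimalPeriod g x ≠ 1 := mt minimalPeriod_eq_one_iff_isFixedPt.1 hx
  omega

lemma Function.iterate_minimalPeriod_sub_two {α : Type*} {g : α → α} {x : α}
    (h : 2 ≤ minimalPeriod g x) : g (g (g^[minimalPeriod g x - 2] x)) = x := by
  rw [← iterate_succ_apply' g, ← iterate_succ_apply' g]
  convert iterate_minimalPeriod using 2
  omega

section OutDegreeTwo

variable {Q₀ Q₁ : Type*} [DecidableEq Q₀] [Fintype Q₁] {s : Q₁ → Q₀} {bar : Q₁ → Q₁}

lemma bar_eq_of_source_eq (hout : ∀ v : Q₀, #(univ.filter fun e => s e = v) = 2)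
    (hbar_ne : ∀ α : Q₁, bar α ≠ α) (hbar_s : ∀ α : Q₁, s (bar α) = s α) {a x : Q₁}
    (hxa : x ≠ a) (hx : s x = s a) : bar a = x := by
  have mem : ∀ {e}, s e = s a → e ∈ univ.filter fun e => s e = s a := by simp
  exact (eq_or_eq_of_card_eq_two (hout (s a)) (mem hx) (mem rfl) (mem (hbar_s a)) hxa).resolve_right
    (hbar_ne a)

lemma bar_bar (hout : ∀ v : Q₀, #(univ.filter fun e => s e = v) = 2)
    (hbar_ne : ∀ α : Q₁, bar α ≠ α) (hbar_s : ∀ α : Q₁, s (bar α) = s α) (a : Q₁) :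
    bar (bar a) = a :=
  bar_eq_of_source_eq hout hbar_ne hbar_s (hbar_ne a).symm (hbar_s a).symm

lemma eq_bar_comp_of_source_eq {t : Q₁ → Q₀} {f g : Q₁ → Q₁}
    (hout : ∀ v : Q₀, #(univ.filter fun e => s e = v) = 2)
    (hbar_ne : ∀ α : Q₁, bar α ≠ α) (hbar_s : ∀ α : Q₁, s (bar α) = s α)
    (hfg : ∀ α : Q₁, f α ≠ g α) (hsf : ∀ α : Q₁, s (f α) = t α)
    (hsg : ∀ α : Q₁, s (g α) = t α) (a : Q₁) : g a = bar (f a) :=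
  (bar_eq_of_source_eq hout hbar_ne hbar_s (hfg a).symm (by rw [hsf, hsg])).symm

end OutDegreeTwo

lemma apply_apply_eq_bar_of_eq_bar_comp {Q₁ : Type*} {f g bar : Q₁ → Q₁}
    (hg : ∀ a, g a = bar (f a)) (hbar : ∀ a, bar (bar a) = a) (hf3 : ∀ a, f (f (f a)) = a)
    (α : Q₁) : g (g (f (f (g (f α))))) = bar α := by
  rw [hg (f (f (g (f α)))), hg (f α), hf3, hbar, hg, hf3]

theorem stmt_7_general
  {Q₀ Q₁ : Type} [Fintype Q₁] [DecidableEq Q₀]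
  (s t : Q₁ → Q₀)
  (hnoloop : ∀ e : Q₁, s e ≠ t e)
  (hout : ∀ v : Q₀, (Finset.univ.filter fun e => s e = v).card = 2)
  (f g : Q₁ ≃ Q₁)
  (hfg : ∀ α : Q₁, f α ≠ g α)
  (hsf : ∀ α : Q₁, s (f α) = t α)
  (hsg : ∀ α : Q₁, s (g α) = t α)
  (hf3 : ∀ α : Q₁, f (f (f α)) = α)
  (bar : Q₁ → Q₁)
  (hbar_ne : ∀ α : Q₁, bar α ≠ α)
  (hbar_s : ∀ α : Q₁, s (bar α) = s α) :
    ∀ α : Q₁, g (f α) = f ((⇑g)^[Function.minimalPeriod (⇑g) (bar α) - 2] (bar α)) := by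
  intro α
  have hg_not_fixed : ¬ IsFixedPt g (bar α) := fun h => hnoloop (bar α) (by rw [← hsg, h])
  have hg := eq_bar_comp_of_source_eq hout hbar_ne hbar_s hfg hsf hsg
  have horbit : g (g (f (f (g (f α))))) =
      g (g (g^[minimalPeriod g (bar α) - 2] (bar α))) :=
    (apply_apply_eq_bar_of_eq_bar_comp hg (bar_bar hout hbar_ne hbar_s) hf3 α).trans
      (iterate_minimalPeriod_sub_two (two_le_minimalPeriod g.injective hg_not_fixed)).symm
  rw [← g.injective (g.injective horbit), hf3]

theorem stmt_7
  {Q₀ Q₁ : Type} [Fintype Q₀] [Fintype Q₁] [DecidableEq Q₀] [DecidableEq Q₁]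
  [Nonempty Q₀] [Nonempty Q₁]
  (s t : Q₁ → Q₀)
  (hconn : ∀ u v : Q₀, Relation.EqvGen (fun a b => ∃ e : Q₁, s e = a ∧ t e = b) u v)
  (hnoloop : ∀ e : Q₁, s e ≠ t e)
  (hno2cyc : ∀ e e' : Q₁, ¬ (s e = t e' ∧ t e = s e'))
  (hout : ∀ v : Q₀, (Finset.univ.filter fun e => s e = v).card = 2)
  (hin : ∀ v : Q₀, (Finset.univ.filter fun e => t e = v).card = 2)
  (f g : Q₁ ≃ Q₁)
  (hfg : ∀ α : Q₁, f α ≠ g α)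
  (hsf : ∀ α : Q₁, s (f α) = t α)
  (hsg : ∀ α : Q₁, s (g α) = t α)
  (hf3 : ∀ α : Q₁, f (f (f α)) = α)
  (bar : Q₁ → Q₁)
  (hbar_ne : ∀ α : Q₁, bar α ≠ α)
  (hbar_s : ∀ α : Q₁, s (bar α) = s α) :
    ∀ α : Q₁, g (f α) = f ((⇑g)^[Function.minimalPeriod (⇑g) (bar α) - 2] (bar α)) :=
  stmt_7_general s t hnoloop hout f g hfg hsf hsg hf3 bar hbar_ne hbar_s
end

section
/- For every arrow α ∈ Q₁ the following elements of A are all equal: x(α)·x(f(α))·x(f²(α)) = c(α)·x(α)·x(g(α))·x(g²(α))⋯x(g^{n_α−1}(α)) = c(ᾱ)·x(ᾱ)·x(g(ᾱ))·x(g²(ᾱ))⋯x(g^{n_ᾱ−1}(ᾱ)) = x(ᾱ)·x(f(ᾱ))·x(f²(ᾱ)). -/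
/-! Multiplying the Jacobian relation at `α` on the left by `x α` closes the `g`-cycle through
`α`, which gives the first equality (and, at `ᾱ`, the last). For `β = f² α`, multiplying the
relation at `β` on the right by `x β` closes instead the `g`-cycle through `g β`. Now `g β`
starts at `t β = s α` and differs from `α` (because `f β = α ≠ g β`), so it is the other arrow `ᾱ`
leaving `s α`; and `c β = c (g β)`. -/

/-- The product `x α * x (g α) * ⋯ * x (g^[m-1] α)` of `m` factors along the `g`-orbit,
read left to right (the empty product for `m = 0` is `1`). -/
def gpath {Q₁ A : Type} [Ring A] (x : Q₁ → A) (g : Q₁ → Q₁) (α : Q₁) (m : ℕ) : A :=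
  ((List.range m).map fun i => x (g^[i] α)).prod

open Function Finset

section gpath

variable {Q₁ A : Type} [Ring A] (x : Q₁ → A) (g : Q₁ → Q₁)

theorem gpath_succ (α : Q₁) (m : ℕ) :
    gpath x g α (m + 1) = gpath x g α m * x (g^[m] α) := by
  simp [gpath, List.range_succ]

theorem gpath_succ' (α : Q₁) (m : ℕ) :
    gpath x g α (m + 1) = x α * gpath x g (g α) m := by
  simp [gpath, List.range_succ_eq_map, Function.comp_def, Function.iterate_succ_apply]

variable {x g} {α : Q₁}

theorem gpath_minimalPeriod (hα : α ∈ periodicPts g) :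
    gpath x g α (minimalPeriod g α) = x α * gpath x g (g α) (minimalPeriod g α - 1) := by
  obtain ⟨m, hm⟩ := Nat.exists_eq_add_one.2 (minimalPeriod_pos_of_mem_periodicPts hα)
  rw [hm, gpath_succ', Nat.add_sub_cancel]

theorem gpath_minimalPeriod_apply (hα : α ∈ periodicPts g) :
    gpath x g (g α) (minimalPeriod g (g α)) = gpath x g (g α) (minimalPeriod g α - 1) * x α := by
  obtain ⟨m, hm⟩ := Nat.exists_eq_add_one.2 (minimalPeriod_pos_of_mem_periodicPts hα)
  have hcycle : g^[m] (g α) = α := by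
    simpa only [hm, iterate_succ_apply] using iterate_minimalPeriod (f := g) (x := α)
  rw [minimalPeriod_apply hα, hm, gpath_succ, hcycle, Nat.add_sub_cancel]

end gpath

section Potential

variable {Q₁ K A : Type} [CommSemiring K] [Ring A] [Algebra K A]
  {f g : Q₁ → Q₁} {c : Q₁ → K} {x : Q₁ → A} {α : Q₁}

theorem mul_mul_eq_smul_gpath_minimalPeriod (hα : α ∈ periodicPts g)
    (hrel : x (f α) * x (f (f α)) = c α • gpath x g (g α) (minimalPeriod g α - 1)) :
    x α * x (f α) * x (f (f α)) = c α • gpath x g α (minimalPeriod g α) := by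
  rw [gpath_minimalPeriod hα, mul_assoc, hrel, mul_smul_comm]

theorem mul_mul_eq_smul_gpath_minimalPeriod_apply (hα : α ∈ periodicPts g)
    (hrel : x (f α) * x (f (f α)) = c α • gpath x g (g α) (minimalPeriod g α - 1)) :
    x (f α) * x (f (f α)) * x α = c α • gpath x g (g α) (minimalPeriod g (g α)) := by
  rw [gpath_minimalPeriod_apply hα, hrel, smul_mul_assoc]

end Potential

theorem eq_of_ne_of_card_filter_le_two {Q₀ Q₁ : Type} [Fintype Q₁] [DecidableEq Q₀]
    {s : Q₁ → Q₀} {v : Q₀} (hv : (univ.filter fun e => s e = v).card ≤ 2) {a b c : Q₁}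
    (ha : s a = v) (hb : s b = v) (hc : s c = v) (hab : a ≠ b) (hac : a ≠ c) : b = c := by
  by_contra hbc
  have : 2 < (univ.filter fun e => s e = v).card :=
    two_lt_card.2 ⟨a, by simpa, b, by simpa, c, by simpa, hab, hac, hbc⟩
  omega

theorem stmt_11_general
  {Q₀ Q₁ : Type} [Fintype Q₁] [DecidableEq Q₀]
  (s t : Q₁ → Q₀)
  (hout : ∀ v : Q₀, (Finset.univ.filter fun e => s e = v).card = 2)
  (f g : Q₁ ≃ Q₁)
  (hfg : ∀ α : Q₁, f α ≠ g α)
  (hsf : ∀ α : Q₁, s (f α) = t α)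
  (hsg : ∀ α : Q₁, s (g α) = t α)
  (hf3 : ∀ α : Q₁, f (f (f α)) = α)
  (bar : Q₁ → Q₁)
  (hbar_ne : ∀ α : Q₁, bar α ≠ α)
  (hbar_s : ∀ α : Q₁, s (bar α) = s α)
  {K : Type} [Field K] {A : Type} [Ring A] [Algebra K A]
  (c : Q₁ → K) (hcg : ∀ α : Q₁, c (g α) = c α)
  (x : Q₁ → A)
  (hrel : ∀ α : Q₁, x (f α) * x (f (f α)) =
      c α • gpath x (⇑g) (g α) (Function.minimalPeriod (⇑g) α - 1)) :
    ∀ α : Q₁,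
      x α * x (f α) * x (f (f α)) =
        c α • gpath x (⇑g) α (Function.minimalPeriod (⇑g) α) ∧
      c α • gpath x (⇑g) α (Function.minimalPeriod (⇑g) α) =
        c (bar α) • gpath x (⇑g) (bar α) (Function.minimalPeriod (⇑g) (bar α)) ∧
      c (bar α) • gpath x (⇑g) (bar α) (Function.minimalPeriod (⇑g) (bar α)) =
        x (bar α) * x (f (bar α)) * x (f (f (bar α))) := by
  have hper : ∀ β, β ∈ periodicPts g := g.injective.mem_periodicPts
  have hA := fun β => mul_mul_eq_smul_gpath_minimalPeriod (hper β) (hrel β)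
  intro α
  set β := f (f α)
  have hbar : bar α = g β := by
    refine eq_of_ne_of_card_filter_le_two (hout (s α)).le rfl (hbar_s α) ?_ (hbar_ne α).symm ?_
    · rw [hsg, ← hsf, hf3]
    · intro h
      exact hfg β (by rw [hf3, ← h])
  have hB : x α * x (f α) * x β = c (bar α) • gpath x g (bar α) (minimalPeriod g (bar α)) := by
    have h := mul_mul_eq_smul_gpath_minimalPeriod_apply (hper β) (hrel β)
    rwa [hf3, ← hcg, ← hbar] at h
  exact ⟨hA α, (hA α).symm.trans hB, (hA (bar α)).symm⟩

theorem stmt_11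
  {Q₀ Q₁ : Type} [Fintype Q₀] [Fintype Q₁] [DecidableEq Q₀] [DecidableEq Q₁]
  [Nonempty Q₀] [Nonempty Q₁]
  (s t : Q₁ → Q₀)
  (hconn : ∀ u v : Q₀, Relation.EqvGen (fun a b => ∃ e : Q₁, s e = a ∧ t e = b) u v)
  (hnoloop : ∀ e : Q₁, s e ≠ t e)
  (hno2cyc : ∀ e e' : Q₁, ¬ (s e = t e' ∧ t e = s e'))
  (hout : ∀ v : Q₀, (Finset.univ.filter fun e => s e = v).card = 2)
  (hin : ∀ v : Q₀, (Finset.univ.filter fun e => t e = v).card = 2)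
  (f g : Q₁ ≃ Q₁)
  (hfg : ∀ α : Q₁, f α ≠ g α)
  (hsf : ∀ α : Q₁, s (f α) = t α)
  (hsg : ∀ α : Q₁, s (g α) = t α)
  (hf3 : ∀ α : Q₁, f (f (f α)) = α)
  (bar : Q₁ → Q₁)
  (hbar_ne : ∀ α : Q₁, bar α ≠ α)
  (hbar_s : ∀ α : Q₁, s (bar α) = s α)
  {K : Type} [Field K] {A : Type} [Ring A] [Algebra K A]
  (c : Q₁ → K) (hc0 : ∀ α : Q₁, c α ≠ 0) (hcg : ∀ α : Q₁, c (g α) = c α)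
  (x : Q₁ → A)
  (hrel : ∀ α : Q₁, x (f α) * x (f (f α)) =
      c α • gpath x (⇑g) (g α) (Function.minimalPeriod (⇑g) α - 1)) :
    ∀ α : Q₁,
      x α * x (f α) * x (f (f α)) =
        c α • gpath x (⇑g) α (Function.minimalPeriod (⇑g) α) ∧
      c α • gpath x (⇑g) α (Function.minimalPeriod (⇑g) α) =
        c (bar α) • gpath x (⇑g) (bar α) (Function.minimalPeriod (⇑g) (bar α)) ∧
      c (bar α) • gpath x (⇑g) (bar α) (Function.minimalPeriod (⇑g) (bar α)) =
        x (bar α) * x (f (bar α)) * x (f (f (bar α))) :=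
  stmt_11_general s t hout f g hfg hsf hsg hf3 bar hbar_ne hbar_s c hcg x hrel
end

section
/- For every arrow α ∈ Q₁ one has the relation x(α)·x(f(α))·x(g(f(α))) = c(ᾱ)·x(ᾱ)·x(g(ᾱ))⋯x(g^{n_ᾱ−3}(ᾱ))·x(g^{n_ᾱ−2}(ᾱ))·x(f(g^{n_ᾱ−2}(ᾱ))) in A. -/
/-!
Write `γ = f² α`, so that `f γ = α`. Since `f β` and `g β` are the two arrows leaving `t β`,
`bar (f β) = g β` and `bar (g β) = f β`; in particular `bar α = g γ`. The Jacobian relation at `γ`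
says `x α * x (f α) = c γ • gpath x g (g γ) (n - 1)`, with `n` the common `g`-period of `γ` and
`bar α`. Multiplying on the right by `x (g (f α))` gives the claim, because
`g^[n-2] (bar α) = g⁻¹ γ` and `f (g⁻¹ γ) = bar γ = g (f α)`.
-/

open Function

theorem Finset.eq_of_mem_of_ne_of_card_eq_two {ι : Type*} {S : Finset ι} (hS : S.card = 2)
    {a b d : ι} (ha : a ∈ S) (hb : b ∈ S) (hd : d ∈ S) (hba : b ≠ a) (hda : d ≠ a) : d = b := by
  classical
  obtain ⟨u, w, -, rfl⟩ := Finset.card_eq_two.mp hS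
  simp only [Finset.mem_insert, Finset.mem_singleton] at hb hd ha
  rcases ha with rfl | rfl <;> rcases hb with rfl | rfl <;> rcases hd with rfl | rfl <;> tauto

namespace Equiv.Perm

variable {α : Type*} {σ : Perm α} {y : α}

theorem iterate_minimalPeriod_sub_one_apply (hy : y ∈ periodicPts σ) :
    σ^[minimalPeriod σ y - 1] y = σ.symm y := by
  apply σ.injective
  rw [apply_symm_apply, ← iterate_succ_apply' σ, Nat.succ_eq_add_one,
    Nat.sub_add_cancel (minimalPeriod_pos_of_mem_periodicPts hy), iterate_minimalPeriod]

theorem iterate_minimalPeriod_sub_two_apply_self (hy : y ∈ periodicPts σ) :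
    σ^[minimalPeriod σ (σ y) - 2] (σ y) = σ.symm y := by
  rw [minimalPeriod_apply hy]
  obtain hn | hn := Nat.lt_or_ge (minimalPeriod σ y) 2
  · have hfix : σ y = y := by
      have := minimalPeriod_pos_of_mem_periodicPts hy
      simpa [show minimalPeriod σ y = 1 by omega] using iterate_minimalPeriod (f := σ) (x := y)
    rw [Nat.sub_eq_zero_of_le hn.le, iterate_zero_apply, hfix, eq_comm, symm_apply_eq, hfix]
  · rw [← iterate_succ_apply, Nat.succ_eq_add_one,
      show minimalPeriod σ y - 2 + 1 = minimalPeriod σ y - 1 by omega,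
      iterate_minimalPeriod_sub_one_apply hy]

end Equiv.Perm

theorem stmt_13_general
  {Q₀ Q₁ : Type} [Fintype Q₁] [DecidableEq Q₀]
  (s t : Q₁ → Q₀)
  (hout : ∀ v : Q₀, (Finset.univ.filter fun e => s e = v).card = 2)
  (f g : Q₁ ≃ Q₁)
  (hfg : ∀ α : Q₁, f α ≠ g α)
  (hsf : ∀ α : Q₁, s (f α) = t α)
  (hsg : ∀ α : Q₁, s (g α) = t α)
  (hf3 : ∀ α : Q₁, f (f (f α)) = α)
  (bar : Q₁ → Q₁)
  (hbar_ne : ∀ α : Q₁, bar α ≠ α)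
  (hbar_s : ∀ α : Q₁, s (bar α) = s α)
  {K : Type} [Field K] {A : Type} [Ring A] [Algebra K A]
  (c : Q₁ → K) (hcg : ∀ α : Q₁, c (g α) = c α)
  (x : Q₁ → A)
  (hrel : ∀ α : Q₁, x (f α) * x (f (f α)) =
      c α • gpath x (⇑g) (g α) (Function.minimalPeriod (⇑g) α - 1)) :
    ∀ α : Q₁, x α * x (f α) * x (g (f α)) =
      c (bar α) • (gpath x (⇑g) (bar α) (Function.minimalPeriod (⇑g) (bar α) - 1) *
        x (f ((⇑g)^[Function.minimalPeriod (⇑g) (bar α) - 2] (bar α)))) := by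
  have bar_eq {a b : Q₁} (hb : s b = s a) (hba : b ≠ a) : bar a = b :=
    Finset.eq_of_mem_of_ne_of_card_eq_two (hout (s a)) (by simp) (by simpa using hb)
      (by simpa using hbar_s a) hba (hbar_ne a)
  have bar_f (β : Q₁) : bar (f β) = g β := bar_eq (by rw [hsg, hsf]) (hfg β).symm
  have bar_g (β : Q₁) : bar (g β) = f β := bar_eq (by rw [hsg, hsf]) (hfg β)
  intro α
  set γ := f (f α)
  have hbarα : bar α = g γ := by rw [← hf3 α, bar_f]
  have hγ : γ ∈ periodicPts g := g.injective.mem_periodicPts γ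
  have hlast : f (g^[minimalPeriod g (bar α) - 2] (bar α)) = g (f α) := by
    rw [hbarα, Equiv.Perm.iterate_minimalPeriod_sub_two_apply_self hγ, ← bar_g,
      Equiv.apply_symm_apply, bar_f]
  have hrelγ := hrel γ
  rw [hf3 α, ← minimalPeriod_apply hγ, ← hcg, ← hbarα] at hrelγ
  rw [hlast, ← smul_mul_assoc, ← hrelγ]

theorem stmt_13
  {Q₀ Q₁ : Type} [Fintype Q₀] [Fintype Q₁] [DecidableEq Q₀] [DecidableEq Q₁]
  [Nonempty Q₀] [Nonempty Q₁]
  (s t : Q₁ → Q₀)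
  (hconn : ∀ u v : Q₀, Relation.EqvGen (fun a b => ∃ e : Q₁, s e = a ∧ t e = b) u v)
  (hnoloop : ∀ e : Q₁, s e ≠ t e)
  (hno2cyc : ∀ e e' : Q₁, ¬ (s e = t e' ∧ t e = s e'))
  (hout : ∀ v : Q₀, (Finset.univ.filter fun e => s e = v).card = 2)
  (hin : ∀ v : Q₀, (Finset.univ.filter fun e => t e = v).card = 2)
  (f g : Q₁ ≃ Q₁)
  (hfg : ∀ α : Q₁, f α ≠ g α)
  (hsf : ∀ α : Q₁, s (f α) = t α)
  (hsg : ∀ α : Q₁, s (g α) = t α)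
  (hf3 : ∀ α : Q₁, f (f (f α)) = α)
  (bar : Q₁ → Q₁)
  (hbar_ne : ∀ α : Q₁, bar α ≠ α)
  (hbar_s : ∀ α : Q₁, s (bar α) = s α)
  {K : Type} [Field K] {A : Type} [Ring A] [Algebra K A]
  (c : Q₁ → K) (hc0 : ∀ α : Q₁, c α ≠ 0) (hcg : ∀ α : Q₁, c (g α) = c α)
  (x : Q₁ → A)
  (hrel : ∀ α : Q₁, x (f α) * x (f (f α)) =
      c α • gpath x (⇑g) (g α) (Function.minimalPeriod (⇑g) α - 1)) :
    ∀ α : Q₁, x α * x (f α) * x (g (f α)) =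
      c (bar α) • (gpath x (⇑g) (bar α) (Function.minimalPeriod (⇑g) (bar α) - 1) *
        x (f ((⇑g)^[Function.minimalPeriod (⇑g) (bar α) - 2] (bar α)))) :=
  stmt_13_general s t hout f g hfg hsf hsg hf3 bar hbar_ne hbar_s c hcg x hrel
end
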